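/- With Γ(w)(t) := π U_t (w(t) − Π_{rg(ℓ)^⊥} w(0)) as above, for each t ∈ ℝ₊ the map Γ is 𝓑_t(𝕎(𝓗))/𝓑_t(𝕎(H))-measurable, where 𝓑_t denotes the σ-algebra generated by evaluations at times in [0,t]. -/

import Mathlib

open MeasureTheory Set NNReal

/-- The σ-algebra `𝓑_t(𝕎(K))` on the path space `C(ℝ₊; K)` generated by the
evaluation maps `w ↦ w(s)` for `s ∈ [0,t]`. -/
def pathFiltration (K : Type) [TopologicalSpace K] (t : ℝ≥0) :
    MeasurableSpace C(ℝ≥0, K) :=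
  ⨆ s ∈ Set.Icc (0 : ℝ≥0) t, (borel K).comap fun w : C(ℝ≥0, K) => w s

/-- With `Γ(w)(t) = π U_t (w(t) − Π_{rg(ℓ)^⊥} w(0))` as in the
method of the moving frame, for each `t ∈ ℝ₊` the map `Γ` is
`𝓑_t(𝕎(𝓗)) / 𝓑_t(𝕎(H))`-measurable, where `𝓑_t` is generated by the
evaluations at times in `[0,t]`. -/
theorem Gamma_filtration_measurable
    (H 𝓗 : Type)
    [NormedAddCommGroup H] [InnerProductSpace ℝ H] [CompleteSpace H]
    [TopologicalSpace.SeparableSpace H]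
    [NormedAddCommGroup 𝓗] [InnerProductSpace ℝ 𝓗] [CompleteSpace 𝓗]
    [TopologicalSpace.SeparableSpace 𝓗]
    (U : ℝ → 𝓗 →L[ℝ] 𝓗)
    (hU0 : U 0 = ContinuousLinearMap.id ℝ 𝓗)
    (hUadd : ∀ s t : ℝ, U (s + t) = (U s).comp (U t))
    (hUcont : ∀ x : 𝓗, Continuous fun t : ℝ => U t x)
    (ℓ : H →L[ℝ] 𝓗) (π : 𝓗 →L[ℝ] H)
    (hinj : Function.Injective ℓ)
    (hsurj : LinearMap.range (π : 𝓗 →ₗ[ℝ] H) = ⊤)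
    (hker : LinearMap.ker (π : 𝓗 →ₗ[ℝ] H) = (LinearMap.range (ℓ : H →ₗ[ℝ] 𝓗))ᗮ)
    (P : 𝓗 →L[ℝ] 𝓗)
    (hP₁ : ∀ x : 𝓗, P x ∈ (LinearMap.range (ℓ : H →ₗ[ℝ] 𝓗))ᗮ)
    (hP₂ : ∀ x : 𝓗, x - P x ∈ ((LinearMap.range (ℓ : H →ₗ[ℝ] 𝓗))ᗮ)ᗮ)
    (Γ : C(ℝ≥0, 𝓗) → C(ℝ≥0, H))
    (hΓ : ∀ (w : C(ℝ≥0, 𝓗)) (t : ℝ≥0), Γ w t = π (U t (w t - P (w 0)))) :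
    ∀ t : ℝ≥0,
      @Measurable C(ℝ≥0, 𝓗) C(ℝ≥0, H) (pathFiltration 𝓗 t) (pathFiltration H t) Γ := by
  intro t
  letI : MeasurableSpace H := borel H
  haveI : BorelSpace H := ⟨rfl⟩
  letI : MeasurableSpace 𝓗 := borel 𝓗
  haveI : BorelSpace 𝓗 := ⟨rfl⟩
  have heval : ∀ r ∈ Set.Icc (0 : ℝ≥0) t,
      @Measurable _ _ (pathFiltration 𝓗 t) _ fun w : C(ℝ≥0, 𝓗) => w r := by
    intro r hr
    rw [measurable_iff_comap_le]
    exact le_iSup₂ (f := fun r (_ : r ∈ Set.Icc (0 : ℝ≥0) t) =>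
      MeasurableSpace.comap (fun w : C(ℝ≥0, 𝓗) => w r) (borel 𝓗)) r hr
  rw [measurable_iff_comap_le, pathFiltration, MeasurableSpace.comap_iSup]
  refine iSup_le fun s => ?_
  rw [MeasurableSpace.comap_iSup]
  refine iSup_le fun hs => ?_
  rw [MeasurableSpace.comap_comp]
  have h : @Measurable _ _ (pathFiltration 𝓗 t) _ fun w : C(ℝ≥0, 𝓗) => Γ w s := by
    have h1 := heval s hs
    have h0 := heval 0 ⟨le_rfl, zero_le (a := t)⟩
    have hmain : @Measurable _ _ (pathFiltration 𝓗 t) _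
        fun w : C(ℝ≥0, 𝓗) => π (U s (w s - P (w 0))) :=
      ((π.comp (U (s : ℝ))).continuous.measurable).comp
        (h1.sub (P.continuous.measurable.comp h0))
    have : (fun w : C(ℝ≥0, 𝓗) => Γ w s) =
        fun w : C(ℝ≥0, 𝓗) => π (U s (w s - P (w 0))) := funext fun w => hΓ w s
    rw [this]
    exact hmain
  exact measurable_iff_comap_le.mp h
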